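/- Let v ∈ ℝ^n be a nonzero vector with both signs: suppose exactly k entries of v are negative and the remaining n−k entries are nonnegative (and v has at least one strictly positive and one strictly negative entry). Then Σ_{i,j}(v_i − v_j)^2 ≥ n · min(k/n, 1 − k/n) · Σ_i v_i^2, where the double sum is over all ordered pairs (i,j). -/
import Mathlib


open Finset in
/-- If a nonzero vector has exactly `k` strictly negative entries
(`1 ≤ k ≤ n−1`), the rest nonnegative with at least one strictly positive,
then `Σ_{i,j}(v_i−v_j)² ≥ n · min(k/n, 1−k/n) · Σ_i v_i²`. -/
theorem sum_sq_diff_ge_min_proportion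
    (n : ℕ) (v : Fin n → ℝ) (hv : v ≠ 0)
    (k : ℕ) (hk : k = (Finset.univ.filter (fun i => v i < 0)).card)
    (hk1 : 1 ≤ k) (hk2 : k ≤ n - 1) (hpos : ∃ i, 0 < v i) :
    (n : ℝ) * min ((k : ℝ) / n) (1 - (k : ℝ) / n) * (∑ i, (v i) ^ 2)
      ≤ ∑ i, ∑ j, (v i - v j) ^ 2 := by
  have hn2 : 2 ≤ n := by omega
  have hn0 : (0:ℝ) < (n:ℝ) := by positivity
  have hkn : k ≤ n := by omega
  set N : Finset (Fin n) := univ.filter (fun i => v i < 0) with hN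
  set P : Finset (Fin n) := univ.filter (fun i => ¬ v i < 0) with hP
  have hNcard : N.card = k := hk.symm
  have hPcard : P.card = n - k := by
    have h : N.card + P.card = n := by
      rw [hN, hP]
      simpa using Finset.card_filter_add_card_filter_not
        (s := (univ : Finset (Fin n))) (p := fun i => v i < 0)
    omega
  -- simplify LHS
  have hlhs : (n : ℝ) * min ((k : ℝ) / n) (1 - (k : ℝ) / n)
      = min (k : ℝ) ((n : ℝ) - k) := by
    rw [mul_min_of_nonneg _ _ hn0.le]
    congr 1 <;> field_simp
  rw [hlhs]
  -- key pointwise inequalities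
  have key1 : ∀ i ∈ P, ∀ j ∈ N, (v i)^2 ≤ (v i - v j)^2 := by
    intro i hi j hj
    simp only [hP, Finset.mem_filter, not_lt] at hi
    simp only [hN, Finset.mem_filter] at hj
    nlinarith [hi.2, hj.2, sq_nonneg (v j)]
  have key2 : ∀ i ∈ N, ∀ j ∈ P, (v i)^2 ≤ (v i - v j)^2 := by
    intro i hi j hj
    simp only [hP, Finset.mem_filter, not_lt] at hj
    simp only [hN, Finset.mem_filter] at hi
    nlinarith [hi.2, hj.2, sq_nonneg (v j)]
  have hdisj : Disjoint P N := by
    simp only [hP, hN]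
    exact (Finset.disjoint_filter_filter_not univ univ (fun i => v i < 0)).symm
  -- the sum over P × N pairs
  have hPN : ((n:ℝ) - k) * ∑ i ∈ N, (v i)^2 + (k:ℝ) * ∑ i ∈ P, (v i)^2
      ≤ ∑ i, ∑ j, (v i - v j) ^ 2 := by
    have h1 : ∑ i ∈ P, ∑ j ∈ N, (v i - v j)^2 + ∑ i ∈ N, ∑ j ∈ P, (v i - v j)^2
        ≤ ∑ i, ∑ j, (v i - v j) ^ 2 := by
      calc ∑ i ∈ P, ∑ j ∈ N, (v i - v j)^2 + ∑ i ∈ N, ∑ j ∈ P, (v i - v j)^2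
          ≤ ∑ i ∈ P, ∑ j, (v i - v j)^2 + ∑ i ∈ N, ∑ j, (v i - v j)^2 :=
            add_le_add
              (Finset.sum_le_sum fun i _ =>
                Finset.sum_le_sum_of_subset_of_nonneg (Finset.subset_univ _)
                  (fun j _ _ => sq_nonneg _))
              (Finset.sum_le_sum fun i _ =>
                Finset.sum_le_sum_of_subset_of_nonneg (Finset.subset_univ _)
                  (fun j _ _ => sq_nonneg _))
        _ = ∑ i ∈ P ∪ N, ∑ j, (v i - v j)^2 := (Finset.sum_union hdisj).symm
        _ ≤ ∑ i, ∑ j, (v i - v j) ^ 2 :=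
            Finset.sum_le_sum_of_subset_of_nonneg (Finset.subset_univ _)
              (fun i _ _ => Finset.sum_nonneg fun j _ => sq_nonneg _)
    have h2 : (k:ℝ) * ∑ i ∈ P, (v i)^2 ≤ ∑ i ∈ P, ∑ j ∈ N, (v i - v j)^2 := by
      rw [Finset.mul_sum]
      refine Finset.sum_le_sum fun i hi => ?_
      calc (k:ℝ) * (v i)^2 = ∑ _j ∈ N, (v i)^2 := by
            rw [Finset.sum_const, hNcard, nsmul_eq_mul]
        _ ≤ ∑ j ∈ N, (v i - v j)^2 := Finset.sum_le_sum fun j hj => key1 i hi j hj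
    have h3 : ((n:ℝ) - k) * ∑ i ∈ N, (v i)^2 ≤ ∑ i ∈ N, ∑ j ∈ P, (v i - v j)^2 := by
      rw [Finset.mul_sum]
      refine Finset.sum_le_sum fun i hi => ?_
      calc ((n:ℝ) - k) * (v i)^2 = ∑ _j ∈ P, (v i)^2 := by
            rw [Finset.sum_const, hPcard, nsmul_eq_mul, Nat.cast_sub hkn]
        _ ≤ ∑ j ∈ P, (v i - v j)^2 := Finset.sum_le_sum fun j hj => key2 i hi j hj
    linarith
  have hsplit : ∑ i, (v i)^2 = ∑ i ∈ P, (v i)^2 + ∑ i ∈ N, (v i)^2 := by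
    rw [← Finset.sum_union hdisj]
    congr 1
    ext i
    simp [hP, hN]; exact le_or_gt 0 (v i)
  rw [hsplit]
  have hSP : (0:ℝ) ≤ ∑ i ∈ P, (v i)^2 := Finset.sum_nonneg fun i _ => sq_nonneg _
  have hSN : (0:ℝ) ≤ ∑ i ∈ N, (v i)^2 := Finset.sum_nonneg fun i _ => sq_nonneg _
  have hm1 : min (k:ℝ) ((n:ℝ) - k) ≤ (k:ℝ) := min_le_left _ _
  have hm2 : min (k:ℝ) ((n:ℝ) - k) ≤ (n:ℝ) - k := min_le_right _ _
  nlinarith [hPN]
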